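/- arXiv:1802.03554 — 6 statements merged into one kernel-verified Lean document; each statement's English description precedes it below -/
import Mathlib

section
/- There do not exist subgroups M, N of a group G with Z(G) < M < G and Z(G) < N < G, both M and N being centralizers of subgroups, such that every centralizer C of a subgroup of G satisfies C ≤ M or N ≤ C. -/
theorem stmt_5 {G : Type*} [Group G] :
    ¬ ∃ M N : Subgroup G,
      (∃ H : Subgroup G, M = Subgroup.centralizer (H : Set G)) ∧
      (∃ K : Subgroup G, N = Subgroup.centralizer (K : Set G)) ∧
      Subgroup.center G < M ∧ M < ⊤ ∧ Subgroup.center G < N ∧ N < ⊤ ∧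
      ∀ K : Subgroup G,
        Subgroup.centralizer (K : Set G) ≤ M ∨ N ≤ Subgroup.centralizer (K : Set G) := by
  rintro ⟨M, N, ⟨H, hM⟩, ⟨K, hN⟩, hZM, hMT, hZN, hNT, hcov⟩
  obtain ⟨g, -, hg⟩ := SetLike.exists_of_lt hMT
  have key : ∀ x : G, x ∉ M → x ∈ Subgroup.centralizer (N : Set G) := by
    intro x hx
    rcases hcov (Subgroup.zpowers x) with h | h
    · exfalso
      apply hx
      apply h
      rw [Subgroup.mem_centralizer_iff]
      rintro y ⟨k, rfl⟩
      exact ((Commute.refl x).zpow_left k)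
    · rw [Subgroup.mem_centralizer_iff]
      intro n hn
      have hnc := h hn
      rw [Subgroup.mem_centralizer_iff] at hnc
      exact (hnc x (Subgroup.mem_zpowers x)).symm
  have htop : Subgroup.centralizer (N : Set G) = ⊤ := by
    rw [eq_top_iff]
    intro x _
    by_cases hx : x ∈ M
    · have hxg : x * g ∉ M := fun hxg => hg (by simpa using M.mul_mem (M.inv_mem hx) hxg)
      have : (x * g) * g⁻¹ ∈ Subgroup.centralizer (N : Set G) :=
        Subgroup.mul_mem _ (key _ hxg) (Subgroup.inv_mem _ (key g hg))
      simpa using this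
    · exact key x hx
  have : (N : Set G) ⊆ Subgroup.center G := Subgroup.centralizer_eq_top_iff_subset.mp htop
  exact absurd (fun a ha => this ha) (not_le_of_gt hZN)
end

section
/- The centralizer lattice of a group G has no breaking point: there is no centralizer M of a subgroup with Z(G) < M < G such that every centralizer C of a subgroup satisfies C ≤ M or M ≤ C. -/
theorem stmt_6 {G : Type*} [Group G] :
    ¬ ∃ M : Subgroup G,
      (∃ H : Subgroup G, M = Subgroup.centralizer (H : Set G)) ∧
      Subgroup.center G < M ∧ M < ⊤ ∧
      ∀ K : Subgroup G,
        Subgroup.centralizer (K : Set G) ≤ M ∨ M ≤ Subgroup.centralizer (K : Set G) := by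
  rintro ⟨M, ⟨H, hM⟩, hZM, hMT, hcomp⟩
  set N : Subgroup G := Subgroup.centralizer (M : Set G) with hN
  -- M = centralizer N
  have hMN : M = Subgroup.centralizer (N : Set G) := by
    apply le_antisymm
    · exact Subgroup.le_centralizer_iff.mpr le_rfl
    · have h1 : H ≤ N := by
        rw [hN, hM]
        exact Subgroup.le_centralizer_iff.mpr le_rfl
      calc Subgroup.centralizer (N : Set G) ≤ Subgroup.centralizer (H : Set G) :=
            Subgroup.centralizer_le (by exact_mod_cast h1)
        _ = M := hM.symm
  -- N ≠ ⊤
  have hNT : N ≠ ⊤ := by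
    intro h
    rw [hMN, h] at hZM
    simp only [Subgroup.coe_top, Subgroup.centralizer_univ] at hZM
    exact lt_irrefl _ hZM
  -- every x is in M or in N
  have hunion : ∀ x : G, x ∈ M ∨ x ∈ N := by
    intro x
    rcases hcomp (Subgroup.zpowers x) with h | h
    · left
      apply h
      rw [Subgroup.mem_centralizer_iff]
      rintro h ⟨n, rfl⟩
      exact (Commute.zpow_left (Commute.refl x) n)
    · right
      rw [hN, Subgroup.mem_centralizer_iff]
      intro m hm
      have := h hm
      rw [Subgroup.mem_centralizer_iff] at this
      exact (this x (Subgroup.mem_zpowers x)).symm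
  -- a group is not the union of two proper subgroups
  obtain ⟨a, -, ha⟩ := SetLike.exists_of_lt hMT
  obtain ⟨b, hb⟩ : ∃ b : G, b ∉ N := by
    by_contra h
    push_neg at h
    exact hNT (Subgroup.eq_top_iff' N |>.mpr h)
  have haN : a ∈ N := (hunion a).resolve_left ha
  have hbM : b ∈ M := (hunion b).resolve_right hb
  rcases hunion (a * b) with h | h
  · exact ha (by simpa using M.mul_mem h (M.inv_mem hbM))
  · exact hb (by simpa using N.mul_mem (N.inv_mem haN) h)
end

section
/- For n ≥ 3, the generalized quaternion group Q_{2^n} is not capable: there is no group G with G/Z(G) isomorphic to Q_{2^n}. -/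
open QuaternionGroup Subgroup in
theorem stmt_13 (n : ℕ) (hn : 3 ≤ n) :
    ¬ ∃ (G : Type) (_ : Group G),
      Nonempty ((G ⧸ Subgroup.center G) ≃* QuaternionGroup (2 ^ (n - 2))) := by
  rintro ⟨G, _, ⟨e⟩⟩
  set m := 2 ^ (n - 2) with hm
  have hm1 : 1 ≤ m := Nat.one_le_two_pow
  haveI : NeZero m := ⟨by omega⟩
  let q : G →* QuaternionGroup m := e.toMonoidHom.comp (QuotientGroup.mk' (center G))
  have hqsurj : Function.Surjective q :=
    e.surjective.comp (QuotientGroup.mk'_surjective _)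
  have hker : q.ker = center G := by
    ext g
    simp [q, MonoidHom.mem_ker, QuotientGroup.eq_one_iff]
  obtain ⟨x, hx⟩ := hqsurj (a 1)
  obtain ⟨y, hy⟩ := hqsurj (xa 0)
  -- the element x^m * (y*y)⁻¹ is central
  have hz : x ^ m * (y * y)⁻¹ ∈ center G := by
    rw [← hker, MonoidHom.mem_ker, map_mul, map_pow, map_inv, map_mul, hx, hy]
    simp [a_one_pow]
  -- hence x^m commutes with y
  have hcy : Commute y (x ^ m) := by
    show y * x ^ m = x ^ m * y
    have h := Subgroup.mem_center_iff.mp hz y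
    have h2 : x ^ m = (x ^ m * (y * y)⁻¹) * (y * y) := by group
    rw [h2, ← mul_assoc, h]
    group
  have hcx : Commute x (x ^ m) := (Commute.refl x).pow_right m
  -- Q is generated by a 1 and xa 0
  have hclQ : closure ({a 1, xa 0} : Set (QuaternionGroup m)) = ⊤ := by
    rw [eq_top_iff]
    rintro (i | i) -
    · have : (a i : QuaternionGroup m) = (a 1) ^ (i.val) := by
        rw [a_one_pow, ZMod.natCast_val, ZMod.cast_id]
      rw [this]
      exact pow_mem (subset_closure (by simp)) _
    · have : (xa i : QuaternionGroup m) = xa 0 * (a 1) ^ (i.val) := by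
        rw [a_one_pow, ZMod.natCast_val, ZMod.cast_id, xa_mul_a, zero_add]
      rw [this]
      exact mul_mem (subset_closure (by simp)) (pow_mem (subset_closure (by simp)) _)
  -- G is generated by x, y and the center
  have htop : closure ({x, y} : Set G) ⊔ center G = ⊤ := by
    have h1 : Subgroup.map q (closure {x, y}) = ⊤ := by
      rw [MonoidHom.map_closure]
      have : q '' {x, y} = {a 1, xa 0} := by
        rw [Set.image_pair, hx, hy]
      rw [this, hclQ]
    have h2 := Subgroup.comap_map_eq q (closure {x, y})
    rw [h1, hker] at h2
    rw [← h2, Subgroup.comap_top]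
  -- x^m is central
  have hxmc : x ^ m ∈ center G := by
    have hle : closure ({x, y} : Set G) ⊔ center G ≤ centralizer {x ^ m} := by
      apply sup_le
      · rw [closure_le]
        rintro g (rfl | rfl)
        · exact Subgroup.mem_centralizer_iff.mpr (by rintro s rfl; exact hcx.symm)
        · exact Subgroup.mem_centralizer_iff.mpr (by rintro s rfl; exact hcy.symm)
      · exact center_le_centralizer _
    rw [htop] at hle
    rw [Subgroup.mem_center_iff]
    intro g
    have := hle (Subgroup.mem_top g)
    rw [Subgroup.mem_centralizer_iff] at this
    exact (this (x ^ m) rfl).symm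
  -- contradiction: a 1 ^ m = 1 in Q, but m < 2m
  have h1 : (a 1 : QuaternionGroup m) ^ m = 1 := by
    rw [← hx, ← map_pow]
    rw [← hker] at hxmc
    exact hxmc
  rw [a_one_pow, one_def] at h1
  have h2 : ((m : ℕ) : ZMod (2 * m)) = 0 := by injection h1
  rw [ZMod.natCast_eq_zero_iff] at h2
  have := Nat.le_of_dvd (by omega) h2
  omega
end

section
/- If G is a group such that every element x of G satisfies C_G(x) ≤ M or N ≤ C_G(x), where M and N are proper subgroups of G (M, N ≠ G), then G = M ∪ C_G(N), and hence M = G or C_G(N) = G. -/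
theorem stmt_14 {G : Type*} [Group G] (M N : Subgroup G)
    (hM : M ≠ ⊤) (hN : N ≠ ⊤)
    (h : ∀ x : G, Subgroup.centralizer {x} ≤ M ∨ N ≤ Subgroup.centralizer {x}) :
    (∀ g : G, g ∈ M ∨ g ∈ Subgroup.centralizer (N : Set G)) ∧
      (M = ⊤ ∨ Subgroup.centralizer (N : Set G) = ⊤) := by
  have hcov : ∀ g : G, g ∈ M ∨ g ∈ Subgroup.centralizer (N : Set G) := by
    intro g
    rcases h g with hle | hle
    · left
      exact hle (by rw [Subgroup.mem_centralizer_iff]; rintro x rfl; rfl)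
    · right
      rw [Subgroup.mem_centralizer_iff]
      intro n hn
      have := (Subgroup.mem_centralizer_iff.mp (hle hn)) g rfl
      exact this.symm
  refine ⟨hcov, ?_⟩
  by_contra hcon
  push_neg at hcon
  obtain ⟨hM', hC'⟩ := hcon
  obtain ⟨a, ha⟩ : ∃ a : G, a ∉ M := by
    by_contra hx; push_neg at hx
    exact hM' (((Subgroup.eq_top_iff' _).mpr hx))
  obtain ⟨b, hb⟩ : ∃ b : G, b ∉ Subgroup.centralizer (N : Set G) := by
    by_contra hx; push_neg at hx
    exact hC' (((Subgroup.eq_top_iff' _).mpr hx))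
  have haC : a ∈ Subgroup.centralizer (N : Set G) := (hcov a).resolve_left ha
  have hbM : b ∈ M := (hcov b).resolve_right hb
  rcases hcov (a * b) with hab | hab
  · exact ha (by simpa using M.mul_mem hab (M.inv_mem hbM))
  · have := (Subgroup.centralizer (N : Set G)).mul_mem
      ((Subgroup.centralizer (N : Set G)).inv_mem haC) hab
    exact hb (by simpa using this)
end

section
/- If G is a non-abelian group, then there is no subgroup H of G with Z(G) < H < G such that for every element x ∈ G, either C_G(x) ≤ H or H ≤ C_G(x). -/
theorem stmt_15 {G : Type*} [Group G] (h : ∃ a b : G, a * b ≠ b * a) :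
    ¬ ∃ H : Subgroup G, Subgroup.center G < H ∧ H < ⊤ ∧
      ∀ x : G, Subgroup.centralizer {x} ≤ H ∨ H ≤ Subgroup.centralizer {x} := by
  rintro ⟨H, hZ, hT, hC⟩
  -- every x ∉ H satisfies H ≤ centralizer {x}
  have key : ∀ x : G, x ∉ H → H ≤ Subgroup.centralizer {x} := by
    intro x hx
    rcases hC x with h1 | h1
    · exact absurd (h1 (Subgroup.mem_centralizer_singleton_iff.mpr rfl)) hx
    · exact h1
  obtain ⟨t, ht⟩ : ∃ t : G, t ∉ H := by
    by_contra hc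
    push_neg at hc
    exact hT.ne ((Subgroup.eq_top_iff' H).mpr hc)
  have hHZ : H ≤ Subgroup.center G := by
    intro a ha
    rw [Subgroup.mem_center_iff]
    intro g
    by_cases hg : g ∈ H
    · have hgt : g * t ∉ H := fun hmem => ht (by
        have := mul_mem (inv_mem hg) hmem
        rwa [inv_mul_cancel_left] at this)
      have h1 : a * t = t * a := Subgroup.mem_centralizer_singleton_iff.mp (key t ht ha)
      have h2 : a * (g * t) = (g * t) * a :=
        Subgroup.mem_centralizer_singleton_iff.mp (key (g * t) hgt ha)
      have : g * (a * t) = g * (t * a) := by rw [h1]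
      have h3 : g * a * t = g * t * a := by rw [mul_assoc, h1, ← mul_assoc]
      calc g * a = g * t * a * t⁻¹ := by rw [← h3]; group
        _ = a * (g * t) * t⁻¹ := by rw [h2]
        _ = a * g := by group
    · exact (Subgroup.mem_centralizer_singleton_iff.mp (key g hg ha)).symm
  exact absurd hHZ (not_le_of_gt hZ)
end

section
/- If G is a non-abelian group in which the intersection of all centralizers C_G(x) over non-central elements x equals Z(G), and G/Z(G) has a unique minimal nontrivial subgroup, then a contradiction follows; i.e., if G is non-abelian then G/Z(G) does not have a unique minimal nontrivial subgroup. -/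
theorem stmt_19 {G : Type*} [Group G] [Finite G] (h : ∃ a b : G, a * b ≠ b * a) :
    ¬ ∃ Hbar : Subgroup (G ⧸ Subgroup.center G), Hbar ≠ ⊥ ∧
      ∀ K : Subgroup (G ⧸ Subgroup.center G), K ≠ ⊥ → Hbar ≤ K := by
  rintro ⟨Hbar, hne, hmin⟩
  obtain ⟨g, hgH, hg1⟩ := Subgroup.nontrivial_iff_exists_ne_one Hbar |>.mp
    (Subgroup.nontrivial_iff_ne_bot Hbar |>.mpr hne)
  obtain ⟨m, rfl⟩ := QuotientGroup.mk_surjective g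
  have hm1 : (↑m : G ⧸ Subgroup.center G) ≠ 1 := hg1
  -- show m is central
  have hmc : m ∈ Subgroup.center G := by
    rw [Subgroup.mem_center_iff]
    intro x
    by_cases hx : x ∈ Subgroup.center G
    · exact (Subgroup.mem_center_iff.mp hx m).symm.symm ▸ (Subgroup.mem_center_iff.mp hx m)
    · have hxne : (↑x : G ⧸ Subgroup.center G) ≠ 1 := by
        intro hc
        exact hx ((QuotientGroup.eq_one_iff x).mp hc)
      have hKne : Subgroup.zpowers (↑x : G ⧸ Subgroup.center G) ≠ ⊥ := by
        intro hc
        exact hxne (Subgroup.zpowers_eq_bot.mp hc)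
      have hmem : (↑m : G ⧸ Subgroup.center G) ∈ Subgroup.zpowers (↑x : G ⧸ Subgroup.center G) :=
        hmin _ hKne hgH
      obtain ⟨k, hk⟩ := hmem
      have hk' : ((x ^ k : G) : G ⧸ Subgroup.center G) = (↑m : G ⧸ Subgroup.center G) := by
        simpa using hk
      have : (x ^ k)⁻¹ * m ∈ Subgroup.center G := by
        rw [← QuotientGroup.eq_one_iff]
        simp [hk']
      have hz := Subgroup.mem_center_iff.mp this
      have hmeq : m = x ^ k * ((x ^ k)⁻¹ * m) := by group
      calc x * m = x * (x ^ k * ((x ^ k)⁻¹ * m)) := by rw [← hmeq]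
        _ = x ^ k * (x * ((x ^ k)⁻¹ * m)) := by
            rw [← mul_assoc, ((Commute.refl x).zpow_right k).eq, mul_assoc]
        _ = x ^ k * (((x ^ k)⁻¹ * m) * x) := by rw [hz x]
        _ = m * x := by group
  exact hm1 ((QuotientGroup.eq_one_iff m).mpr hmc)
end
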